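/- The controllability Gramian measures the minimum input energy needed to reach a state: assume W_c(j) is invertible and let x ∈ ℂ^n. Then the input sequence u(i) = B(i)* F(j,i+1)* W_c(j)^{−1} x for i ≤ j−1 is square-summable, steers the system from the zero state in the infinite past to the state x at time j (i.e., Σ_{i=−∞}^{j−1} F(j,i+1) B(i) u(i) = x), and has energy Σ_{i=−∞}^{j−1} ‖u(i)‖² = ⟨x, W_c(j)^{−1} x⟩; moreover every square-summable input sequence v with Σ_{i=−∞}^{j−1} F(j,i+1) B(i) v(i) = x satisfies Σ_{i=−∞}^{j−1} ‖v(i)‖² ≥ ⟨x, W_c(j)^{−1} x⟩. -/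

import Mathlib

open scoped Matrix

noncomputable section

open scoped Matrix.Norms.L2Operator

/-- `transMatAux A d i = A(i+d-1) * ⋯ * A(i)`. -/
def transMatAux {n : ℕ} (A : ℤ → Matrix (Fin n) (Fin n) ℂ) : ℕ → ℤ → Matrix (Fin n) (Fin n) ℂ
  | 0, _ => 1
  | (d + 1), i => A (i + d) * transMatAux A d i

/-- The state transition matrix `F(j,i) = A(j-1) * A(j-2) * ⋯ * A(i)` for `j ≥ i`,
with `F(i,i) = 1`. -/
def stateTrans {n : ℕ} (A : ℤ → Matrix (Fin n) (Fin n) ℂ) (j i : ℤ) :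
    Matrix (Fin n) (Fin n) ℂ :=
  transMatAux A (j - i).toNat i

/-- Controllability Gramian at time `j`:
`W_c(j) = ∑_{i=-∞}^{j-1} F(j,i+1) B(i) B(i)* F(j,i+1)*`, parametrized by `i = j-1-k`, `k : ℕ`. -/
def Wc {n p : ℕ} (A : ℤ → Matrix (Fin n) (Fin n) ℂ) (B : ℤ → Matrix (Fin n) (Fin p) ℂ)
    (j : ℤ) : Matrix (Fin n) (Fin n) ℂ :=
  ∑' k : ℕ,
    stateTrans A j (j - k) * B (j - 1 - k) * (B (j - 1 - k))ᴴ * (stateTrans A j (j - k))ᴴ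

/-- Observability Gramian at time `j`:
`W_o(j) = ∑_{i=j}^{∞} F(i,j)* C(i)* C(i) F(i,j)`, parametrized by `i = j+k`, `k : ℕ`. -/
def Wo {n q : ℕ} (A : ℤ → Matrix (Fin n) (Fin n) ℂ) (C : ℤ → Matrix (Fin q) (Fin n) ℂ)
    (j : ℤ) : Matrix (Fin n) (Fin n) ℂ :=
  ∑' k : ℕ, (stateTrans A (j + k) j)ᴴ * (C (j + k))ᴴ * C (j + k) * stateTrans A (j + k) j

/-!
Write `Gₖ = F(j, j - k) B(j - 1 - k)` and `y = W_c(j)⁻¹ x`, so that `uₖ = Gₖᴴ y`. Then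
`∑ Gₖ uₖ = W_c(j) y = x` and `∑ ‖uₖ‖² = ⟨y, W_c(j) y⟩ = ⟨x, W_c(j)⁻¹ x⟩`. Any `v` steering the
system to `x` also has `∑ ⟨uₖ, vₖ⟩ = ⟨y, x⟩`, so summing `‖vₖ‖² ≥ 2 Re ⟨uₖ, vₖ⟩ - ‖uₖ‖²` gives
minimality. The series converge because periodicity gives `Gₖ = M ^ (k / T) * G_(k % T)` for the
monodromy matrix `M = F(j, j - T)`, whose powers are summable in norm by Gelfand's formula.
-/

open Filter Matrix

section MinimumEnergy

variable {m l : Type*} [Fintype l]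

lemma ofReal_sum_norm_sq_eq_star_dotProduct (w : l → ℂ) :
    ((∑ i, ‖w i‖ ^ 2 : ℝ) : ℂ) = star w ⬝ᵥ w := by
  simp [dotProduct, Complex.conj_mul']

lemma two_mul_re_star_dotProduct_sub_le (a b : l → ℂ) :
    2 * (star a ⬝ᵥ b).re - ∑ i, ‖a i‖ ^ 2 ≤ ∑ i, ‖b i‖ ^ 2 := by
  have key : ∀ z w : ℂ, 2 * (star z * w).re - ‖z‖ ^ 2 ≤ ‖w‖ ^ 2 := fun z w => by
    simp only [Complex.sq_norm, Complex.normSq_apply, Complex.mul_re, Complex.star_def,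
      Complex.conj_re, Complex.conj_im]
    nlinarith [sq_nonneg (z.re - w.re), sq_nonneg (z.im - w.im)]
  simpa [dotProduct, Complex.re_sum, Finset.mul_sum] using
    Finset.sum_le_sum fun i (_ : i ∈ Finset.univ) => key (a i) (b i)

variable {G : ℕ → Matrix m l ℂ} {W : Matrix m m ℂ}

lemma isHermitian_of_hasSum_mul_conjTranspose (hW : HasSum (fun k => G k * (G k)ᴴ) W) :
    W.IsHermitian :=
  hW.matrix_conjTranspose.unique (by simpa [conjTranspose_mul] using hW)

variable [Fintype m]

lemma hasSum_star_conjTranspose_mulVec_dotProduct {v : ℕ → l → ℂ} {x : m → ℂ}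
    (h : HasSum (fun k => G k *ᵥ v k) x) (y : m → ℂ) :
    HasSum (fun k => star ((G k)ᴴ *ᵥ y) ⬝ᵥ v k) (star y ⬝ᵥ x) := by
  simp only [star_mulVec, conjTranspose_conjTranspose, ← dotProduct_mulVec]
  simpa [dotProduct] using hasSum_sum fun i _ => (Pi.hasSum.mp h i).mul_left (star y i)

lemma hasSum_mulVec_conjTranspose_mulVec (hW : HasSum (fun k => G k * (G k)ᴴ) W)
    (y : m → ℂ) : HasSum (fun k => G k *ᵥ ((G k)ᴴ *ᵥ y)) (W *ᵥ y) := by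
  simp only [mulVec_mulVec]
  exact hW.map (mulVec.addMonoidHomLeft y) (continuous_id.matrix_mulVec continuous_const)

variable [DecidableEq m] {x : m → ℂ} {u : ℕ → l → ℂ}

lemma hasSum_mulVec_of_gramian_input (hW : HasSum (fun k => G k * (G k)ᴴ) W)
    (hinv : IsUnit W) (hu : ∀ k, u k = (G k)ᴴ *ᵥ (W⁻¹ *ᵥ x)) :
    HasSum (fun k => G k *ᵥ u k) x := by
  have hWW : W * W⁻¹ = 1 := mul_nonsing_inv W ((isUnit_iff_isUnit_det W).mp hinv)
  simpa [hu, mulVec_mulVec, hWW] using hasSum_mulVec_conjTranspose_mulVec hW (W⁻¹ *ᵥ x)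

lemma hasSum_star_gramian_input_dotProduct (hW : HasSum (fun k => G k * (G k)ᴴ) W)
    (hu : ∀ k, u k = (G k)ᴴ *ᵥ (W⁻¹ *ᵥ x)) {v : ℕ → l → ℂ}
    (hv : HasSum (fun k => G k *ᵥ v k) x) :
    HasSum (fun k => star (u k) ⬝ᵥ v k) (star x ⬝ᵥ W⁻¹ *ᵥ x) := by
  have hWinv : (W⁻¹)ᴴ = W⁻¹ := (isHermitian_of_hasSum_mul_conjTranspose hW).inv
  have hyx : star (W⁻¹ *ᵥ x) ⬝ᵥ x = star x ⬝ᵥ W⁻¹ *ᵥ x := by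
    rw [star_mulVec, hWinv, dotProduct_mulVec]
  simpa only [hu, hyx] using hasSum_star_conjTranspose_mulVec_dotProduct hv (W⁻¹ *ᵥ x)

lemma hasSum_energy_of_gramian_input (hW : HasSum (fun k => G k * (G k)ᴴ) W)
    (hinv : IsUnit W) (hu : ∀ k, u k = (G k)ᴴ *ᵥ (W⁻¹ *ᵥ x)) :
    HasSum (fun k => ((∑ i, ‖u k i‖ ^ 2 : ℝ) : ℂ)) (star x ⬝ᵥ W⁻¹ *ᵥ x) := by
  simpa only [ofReal_sum_norm_sq_eq_star_dotProduct] using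
    hasSum_star_gramian_input_dotProduct hW hu (hasSum_mulVec_of_gramian_input hW hinv hu)

lemma tsum_energy_le_of_gramian_input (hW : HasSum (fun k => G k * (G k)ᴴ) W)
    (hinv : IsUnit W) (hu : ∀ k, u k = (G k)ᴴ *ᵥ (W⁻¹ *ᵥ x)) {v : ℕ → l → ℂ}
    (hv_energy : Summable fun k => ∑ i, ‖v k i‖ ^ 2) (hv : HasSum (fun k => G k *ᵥ v k) x) :
    ∑' k, ∑ i, ‖u k i‖ ^ 2 ≤ ∑' k, ∑ i, ‖v k i‖ ^ 2 := by
  set e := (star x ⬝ᵥ W⁻¹ *ᵥ x).re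
  have hu_energy : HasSum (fun k => ∑ i, ‖u k i‖ ^ 2) e := by
    simpa only [Complex.reCLM_apply, Complex.ofReal_re] using
      (hasSum_energy_of_gramian_input hW hinv hu).mapL Complex.reCLM
  have hcross : HasSum (fun k => (star (u k) ⬝ᵥ v k).re) e := by
    simpa using (hasSum_star_gramian_input_dotProduct hW hu hv).mapL Complex.reCLM
  calc ∑' k, ∑ i, ‖u k i‖ ^ 2 = 2 * e - e := by rw [hu_energy.tsum_eq]; ring
    _ = ∑' k, (2 * (star (u k) ⬝ᵥ v k).re - ∑ i, ‖u k i‖ ^ 2) :=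
        ((hcross.mul_left 2).sub hu_energy).tsum_eq.symm
    _ ≤ ∑' k, ∑ i, ‖v k i‖ ^ 2 :=
        ((hcross.mul_left 2).sub hu_energy).summable.tsum_le_tsum
          (fun k => two_mul_re_star_dotProduct_sub_le _ _) hv_energy

end MinimumEnergy

section Summability

lemma summable_norm_pow_of_spectralRadius_lt_one {𝒜 : Type*} [NormedRing 𝒜]
    [NormedAlgebra ℂ 𝒜] [CompleteSpace 𝒜] {a : 𝒜} (h : spectralRadius ℂ a < 1) :
    Summable fun m : ℕ => ‖a ^ m‖ := by
  obtain ⟨r, har, hr1⟩ := ENNReal.lt_iff_exists_nnreal_btwn.mp h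
  have hroot : ∀ᶠ m : ℕ in atTop, (‖a ^ m‖₊ : ENNReal) ^ (1 / (m : ℝ)) < r :=
    (spectrum.pow_nnnorm_pow_one_div_tendsto_nhds_spectralRadius a).eventually_lt_const har
  have hgeom : ∀ᶠ m : ℕ in atTop, ‖a ^ m‖ ≤ (r : ℝ) ^ m := by
    filter_upwards [hroot, eventually_ge_atTop 1] with m hm hm1
    have hpow := ENNReal.rpow_le_rpow hm.le (Nat.cast_nonneg m)
    rw [← ENNReal.rpow_mul, one_div, inv_mul_cancel₀ (by positivity), ENNReal.rpow_one,
      ENNReal.rpow_natCast] at hpow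
    exact_mod_cast hpow
  exact summable_of_isBigO_nat (summable_geometric_of_lt_one r.2 (by exact_mod_cast hr1))
    (Asymptotics.IsBigO.of_bound' (by simpa using hgeom))

lemma summable_comp_div {g : ℕ → ℝ} (hg : Summable g) (hg0 : 0 ≤ g) {T : ℕ} (hT : T ≠ 0) :
    Summable fun k => g (k / T) := by
  have : NeZero T := ⟨hT⟩
  have hprod : Summable fun q : ℕ × Fin T => g q.1 * 1 :=
    hg.mul_of_nonneg (g := fun _ : Fin T => (1 : ℝ)) .of_finite hg0 fun _ => zero_le_one
  simp only [mul_one] at hprod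
  exact (Nat.divModEquiv T).summable_iff.mpr hprod

variable {m l : Type*} [Fintype m] [DecidableEq m] [Fintype l] [DecidableEq l]

lemma summable_norm_of_eq_pow_div_mul_mod {M : Matrix m m ℂ} (hM : spectralRadius ℂ M < 1)
    {T : ℕ} (hT : T ≠ 0) {G : ℕ → Matrix m l ℂ} (hG : ∀ k, G k = M ^ (k / T) * G (k % T)) :
    Summable fun k => ‖G k‖ := by
  set c := ∑ r ∈ Finset.range T, ‖G r‖
  refine ((summable_comp_div (summable_norm_pow_of_spectralRadius_lt_one hM)
    (fun _ => norm_nonneg _) hT).mul_right c).of_nonneg_of_le (fun _ => norm_nonneg _)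
    fun k => ?_
  calc ‖G k‖ ≤ ‖M ^ (k / T)‖ * ‖G (k % T)‖ := by
        conv_lhs => rw [hG k]
        exact l2_opNorm_mul _ _
    _ ≤ ‖M ^ (k / T)‖ * c := by
        gcongr
        exact Finset.single_le_sum (f := fun r => ‖G r‖) (fun _ _ => norm_nonneg _)
          (Finset.mem_range.mpr (Nat.mod_lt k (Nat.pos_of_ne_zero hT)))

lemma summable_mul_conjTranspose_of_summable_norm {G : ℕ → Matrix m l ℂ}
    (hG : Summable fun k => ‖G k‖) : Summable fun k => G k * (G k)ᴴ := by
  refine .of_norm_bounded (hG.mul_left (∑' k, ‖G k‖)) fun k => ?_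
  calc ‖G k * (G k)ᴴ‖ ≤ ‖G k‖ * ‖G k‖ := by
        simpa only [l2_opNorm_conjTranspose] using l2_opNorm_mul (G k) (G k)ᴴ
    _ ≤ (∑' k, ‖G k‖) * ‖G k‖ := by
        gcongr
        exact hG.le_tsum k fun _ _ => norm_nonneg _

end Summability

section TransitionMatrix

variable {n p T : ℕ} {A : ℤ → Matrix (Fin n) (Fin n) ℂ}

lemma transMatAux_add (A : ℤ → Matrix (Fin n) (Fin n) ℂ) (d e : ℕ) (i : ℤ) :
    transMatAux A (d + e) i = transMatAux A d (i + e) * transMatAux A e i := by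
  induction d with
  | zero => simp [transMatAux]
  | succ d ih =>
    rw [Nat.add_right_comm, transMatAux, transMatAux, ih, ← mul_assoc]
    congr 3
    push_cast
    ring

lemma transMatAux_periodic (hA : Function.Periodic A T) (d : ℕ) :
    Function.Periodic (transMatAux A d) T := by
  induction d with
  | zero => exact fun _ => rfl
  | succ d ih =>
    intro i
    simp only [transMatAux, ih i]
    rw [add_right_comm, hA]

lemma transMatAux_eq_pow_mul (hA : Function.Periodic A T) (j : ℤ) (q r : ℕ) :
    transMatAux A (q * T + r) (j - (q * T + r : ℕ)) =
      transMatAux A T (j - T) ^ q * transMatAux A r (j - r) := by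
  induction q with
  | zero => simp
  | succ q ih =>
    have hshift : j - ((T + (q * T + r) : ℕ) : ℤ) = j - (q * T + r : ℕ) - T := by
      push_cast
      ring
    rw [show (q + 1) * T + r = T + (q * T + r) by ring, transMatAux_add, hshift,
      (transMatAux_periodic hA _).sub_eq, ih, pow_succ', mul_assoc]
    congr 2
    ring

lemma stateTrans_sub_natCast (j : ℤ) (k : ℕ) :
    stateTrans A j (j - k) = transMatAux A k (j - k) := by
  rw [stateTrans, show (j - (j - k)).toNat = k by omega]

lemma stateTrans_sub_eq_pow_mul (hA : Function.Periodic A T) (j : ℤ) (k : ℕ) :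
    stateTrans A j (j - k) =
      stateTrans A j (j - T) ^ (k / T) * stateTrans A j (j - (k % T : ℕ)) := by
  simp only [stateTrans_sub_natCast]
  conv_lhs => rw [← Nat.div_add_mod' k T]
  exact transMatAux_eq_pow_mul hA j _ _

def inputToState (A : ℤ → Matrix (Fin n) (Fin n) ℂ) (B : ℤ → Matrix (Fin n) (Fin p) ℂ) (j : ℤ)
    (k : ℕ) : Matrix (Fin n) (Fin p) ℂ :=
  stateTrans A j (j - k) * B (j - 1 - k)

variable {B : ℤ → Matrix (Fin n) (Fin p) ℂ}

lemma inputToState_eq_pow_mul (hA : Function.Periodic A T) (hB : Function.Periodic B T)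
    (j : ℤ) (k : ℕ) :
    inputToState A B j k = stateTrans A j (j - T) ^ (k / T) * inputToState A B j (k % T) := by
  have hBk : B (j - 1 - k) = B (j - 1 - (k % T : ℕ)) := by
    convert hB.sub_nat_mul_eq (k / T) using 2
    have hk : (k : ℤ) = (k % T : ℕ) + (k / T : ℕ) * T := by
      exact_mod_cast (Nat.mod_add_div' k T).symm
    rw [hk]
    ring
  rw [inputToState, inputToState, stateTrans_sub_eq_pow_mul hA, hBk, Matrix.mul_assoc]

lemma hasSum_inputToState_mul_conjTranspose (hA : Function.Periodic A T)
    (hB : Function.Periodic B T) (hT : T ≠ 0) (j : ℤ)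
    (hM : spectralRadius ℂ (stateTrans A j (j - T)) < 1) :
    HasSum (fun k => inputToState A B j k * (inputToState A B j k)ᴴ) (Wc A B j) := by
  have hsum := summable_mul_conjTranspose_of_summable_norm
    (summable_norm_of_eq_pow_div_mul_mod hM hT (inputToState_eq_pow_mul hA hB j))
  convert hsum.hasSum using 1
  simp only [Wc, inputToState, conjTranspose_mul, Matrix.mul_assoc]

end TransitionMatrix

theorem controllability_gramian_minimum_energy_general
    (n p T : ℕ) (hT : 1 ≤ T)
    (A : ℤ → Matrix (Fin n) (Fin n) ℂ) (B : ℤ → Matrix (Fin n) (Fin p) ℂ)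
    (hA : ∀ k : ℤ, A (k + T) = A k) (hB : ∀ k : ℤ, B (k + T) = B k)
    (hstab : ∀ j : ℤ, spectralRadius ℂ (stateTrans A (j + T) j) < 1)
    (j : ℤ) (hinv : IsUnit (Wc A B j))
    (x : Fin n → ℂ) (u : ℕ → Fin p → ℂ)
    (hu : ∀ k : ℕ, u k = (B (j - 1 - k))ᴴ.mulVec
      ((stateTrans A j (j - k))ᴴ.mulVec ((Wc A B j)⁻¹.mulVec x))) :
    Summable (fun k : ℕ => ∑ i : Fin p, ‖u k i‖ ^ 2) ∧
      HasSum (fun k : ℕ => (stateTrans A j (j - k)).mulVec ((B (j - 1 - k)).mulVec (u k))) x ∧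
      ((∑' k : ℕ, ∑ i : Fin p, ‖u k i‖ ^ 2 : ℝ) : ℂ) = star x ⬝ᵥ (Wc A B j)⁻¹.mulVec x ∧
      ∀ v : ℕ → Fin p → ℂ,
        Summable (fun k : ℕ => ∑ i : Fin p, ‖v k i‖ ^ 2) →
        HasSum (fun k : ℕ =>
          (stateTrans A j (j - k)).mulVec ((B (j - 1 - k)).mulVec (v k))) x →
        (∑' k : ℕ, ∑ i : Fin p, ‖u k i‖ ^ 2) ≤ ∑' k : ℕ, ∑ i : Fin p, ‖v k i‖ ^ 2 := by
  have hW := hasSum_inputToState_mul_conjTranspose hA hB (by omega) j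
    (by simpa using hstab (j - T))
  have hu' : ∀ k, u k = (inputToState A B j k)ᴴ *ᵥ ((Wc A B j)⁻¹ *ᵥ x) := fun k => by
    rw [hu k, inputToState, conjTranspose_mul, mulVec_mulVec]
  have henergy := hasSum_energy_of_gramian_input hW hinv hu'
  refine ⟨Complex.summable_ofReal.mp henergy.summable, ?_, ?_, fun v hv_energy hv => ?_⟩
  · simpa only [inputToState, mulVec_mulVec] using hasSum_mulVec_of_gramian_input hW hinv hu'
  · rw [Complex.ofReal_tsum, henergy.tsum_eq]
  · refine tsum_energy_le_of_gramian_input hW hinv hu' hv_energy ?_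
    simpa only [inputToState, mulVec_mulVec] using hv

/-- The controllability Gramian measures the minimum input energy needed
to reach a state: if `W_c(j)` is invertible and `x ∈ ℂ^n`, the input sequence
`u(i) = B(i)* F(j,i+1)* W_c(j)⁻¹ x` for `i ≤ j−1` (parametrized by `i = j-1-k`) is
square-summable, steers the system from the zero state in the infinite past to `x` at
time `j`, and has energy `⟨x, W_c(j)⁻¹ x⟩`; moreover every square-summable input sequence
`v` steering the system to `x` has energy at least `⟨x, W_c(j)⁻¹ x⟩`. -/
theorem controllability_gramian_minimum_energy
    (n p q T : ℕ) (hn : 1 ≤ n) (hp : 1 ≤ p) (hq : 1 ≤ q) (hT : 1 ≤ T)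
    (A : ℤ → Matrix (Fin n) (Fin n) ℂ) (B : ℤ → Matrix (Fin n) (Fin p) ℂ)
    (C : ℤ → Matrix (Fin q) (Fin n) ℂ)
    (hA : ∀ k : ℤ, A (k + T) = A k) (hB : ∀ k : ℤ, B (k + T) = B k)
    (hC : ∀ k : ℤ, C (k + T) = C k)
    (hstab : ∀ j : ℤ, spectralRadius ℂ (stateTrans A (j + T) j) < 1)
    (j : ℤ) (hinv : IsUnit (Wc A B j))
    (x : Fin n → ℂ) (u : ℕ → Fin p → ℂ)
    (hu : ∀ k : ℕ, u k = (B (j - 1 - k))ᴴ.mulVec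
      ((stateTrans A j (j - k))ᴴ.mulVec ((Wc A B j)⁻¹.mulVec x))) :
    Summable (fun k : ℕ => ∑ i : Fin p, ‖u k i‖ ^ 2) ∧
      HasSum (fun k : ℕ => (stateTrans A j (j - k)).mulVec ((B (j - 1 - k)).mulVec (u k))) x ∧
      ((∑' k : ℕ, ∑ i : Fin p, ‖u k i‖ ^ 2 : ℝ) : ℂ) = star x ⬝ᵥ (Wc A B j)⁻¹.mulVec x ∧
      ∀ v : ℕ → Fin p → ℂ,
        Summable (fun k : ℕ => ∑ i : Fin p, ‖v k i‖ ^ 2) →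
        HasSum (fun k : ℕ =>
          (stateTrans A j (j - k)).mulVec ((B (j - 1 - k)).mulVec (v k))) x →
        (∑' k : ℕ, ∑ i : Fin p, ‖u k i‖ ^ 2) ≤ ∑' k : ℕ, ∑ i : Fin p, ‖v k i‖ ^ 2 :=
  controllability_gramian_minimum_energy_general n p T hT A B hA hB hstab j hinv x u hu
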